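/- arXiv:2212.12138 — 7 statements merged into one kernel-verified Lean document; each statement's English description precedes it below -/
import Mathlib

section
/- Let Δ be a shape datum containing two pairs (T,d) and (T',d) with the same second coordinate d, and let Δ' be the shape datum obtained from Δ by replacing these two pairs with the single pair (T+T', d) (all other pairs unchanged, so Δ and Δ' have the same rank). Then R(Δ') > R(Δ). Consequently, among all shape data inducing a fixed partition of N (where a pair (T,d) contributes T parts equal to d), the invariant R is maximized by the datum in which each distinct part value occurs in exactly one pair. -/
/-- The rank of a shape datum `Δ = ((T₁,d₁),…,(T_k,d_k))`: `N = Σ Tᵢ·dᵢ`. -/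
def rankShape (Δ : List (ℕ × ℕ)) : ℕ := (Δ.map (fun p => p.1 * p.2)).sum

/-- The invariant `R̄(Δ) = (1/2)(N² + Σ Tᵢ²·dᵢ)`. -/
def Rbar (Δ : List (ℕ × ℕ)) : ℚ :=
  ((rankShape Δ : ℚ) ^ 2 + (Δ.map (fun p => (p.1 : ℚ) ^ 2 * p.2)).sum) / 2

/-- The correction term subtracted from `R̄` for a single block `(T,d)`. -/
def corr (p : ℕ × ℕ) : ℚ :=
  if p.1 = 1 then ((p.2 : ℚ) ^ 2 + p.2) / 2 - 1
  else if p.1 = 2 then 3 * p.2 - 3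
  else if p.1 = 3 ∧ 1 < p.2 then 9 * p.2 - ((4 + 1 / 10 ^ 100) * p.2 + 5)
  else 0

/-- The invariant `R(Δ)`. -/
def Rshape (Δ : List (ℕ × ℕ)) : ℚ := Rbar Δ - (Δ.map corr).sum

/-- The partition of `N` induced by a shape datum: a pair `(T,d)` contributes
`T` parts equal to `d`. -/
def toPartition (Δ : List (ℕ × ℕ)) : Multiset ℕ :=
  (Δ.map (fun p => Multiset.replicate p.1 p.2)).sum

/-- `R` of a partition: use the shape datum in which each distinct part value
occurs in exactly one pair, with multiplicity as first coordinate. -/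
noncomputable def RQ (Q : Multiset ℕ) : ℚ :=
  Rshape (Q.toFinset.toList.map (fun a => (Q.count a, a)))

/-!
Merging `(T,d)` and `(T',d)` into `(T+T',d)` keeps the rank and raises `Σ Tᵢ²dᵢ` by `2TT'd`,
so `R̄` grows by `TT'd ≥ 1`. The corrections are nonnegative for `d > 0` and vanish once
the first coordinate is at least `4`, so the merged correction can exceed the two old ones by less
than `TT'd` only in the finitely many cases `T, T' ≤ 2`, which are checked directly.
Repeated merging turns any datum into one with distinct second coordinates; that datum is a
permutation of the one used to define `RQ`, and `R` is invariant under permutation.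
-/

lemma corr_nonneg (T : ℕ) {d : ℕ} (hd : 0 < d) : 0 ≤ corr (T, d) := by
  have hd1 : (1 : ℚ) ≤ d := by exact_mod_cast hd
  unfold corr
  split_ifs with h1 h2 h3
  · nlinarith
  · linarith
  · have hd2 : (2 : ℚ) ≤ d := by exact_mod_cast h3.2
    have hε : (1 / 10 ^ 100 : ℚ) ≤ 1 := by norm_num
    nlinarith
  · exact le_rfl

lemma corr_eq_zero_of_four_le {T : ℕ} (hT : 4 ≤ T) (d : ℕ) : corr (T, d) = 0 := by
  simp only [corr]
  rw [if_neg (by omega), if_neg (by omega), if_neg (by omega)]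

lemma corr_add_lt {T T' d : ℕ} (hT : 0 < T) (hT' : 0 < T') (hd : 0 < d) :
    corr (T + T', d) < T * T' * d + corr (T, d) + corr (T', d) := by
  have hd1 : (1 : ℚ) ≤ d := by exact_mod_cast hd
  rcases lt_or_ge (T + T') 4 with h | h
  · obtain ⟨hT2, hT'2⟩ : T ≤ 2 ∧ T' ≤ 2 := by omega
    interval_cases T <;> interval_cases T' <;> simp only [corr] <;> norm_num <;>
      (try split_ifs) <;> nlinarith
  · have hTT' : (1 : ℚ) ≤ T * T' := by exact_mod_cast Nat.one_le_iff_ne_zero.mpr (by positivity)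
    rw [corr_eq_zero_of_four_le h]
    nlinarith [corr_nonneg T hd, corr_nonneg T' hd]

lemma Rshape_merge (A B C : List (ℕ × ℕ)) (T T' d : ℕ) :
    Rshape (A ++ (T + T', d) :: (B ++ C)) =
      Rshape (A ++ (T, d) :: (B ++ (T', d) :: C)) + T * T' * d
        - (corr (T + T', d) - corr (T, d) - corr (T', d)) := by
  simp only [Rshape, Rbar, rankShape, List.map_append, List.map_cons, List.sum_append,
    List.sum_cons]
  push_cast
  ring

lemma Rshape_lt_merge (A B C : List (ℕ × ℕ)) {T T' d : ℕ} (hT : 0 < T) (hT' : 0 < T')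
    (hd : 0 < d) :
    Rshape (A ++ (T, d) :: (B ++ (T', d) :: C)) < Rshape (A ++ (T + T', d) :: (B ++ C)) := by
  rw [Rshape_merge]
  linarith [corr_add_lt hT hT' hd]

lemma Rshape_perm {Δ Δ' : List (ℕ × ℕ)} (h : Δ.Perm Δ') : Rshape Δ = Rshape Δ' := by
  simp only [Rshape, Rbar, rankShape, (h.map _).sum_eq]

lemma toPartition_append (Δ Δ' : List (ℕ × ℕ)) :
    toPartition (Δ ++ Δ') = toPartition Δ + toPartition Δ' := by
  simp only [toPartition, List.map_append, List.sum_append]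

lemma toPartition_cons (p : ℕ × ℕ) (Δ : List (ℕ × ℕ)) :
    toPartition (p :: Δ) = Multiset.replicate p.1 p.2 + toPartition Δ := by
  simp only [toPartition, List.map_cons, List.sum_cons]

lemma toPartition_merge (A B C : List (ℕ × ℕ)) (T T' d : ℕ) :
    toPartition (A ++ (T + T', d) :: (B ++ C)) =
      toPartition (A ++ (T, d) :: (B ++ (T', d) :: C)) := by
  simp only [toPartition_append, toPartition_cons, Multiset.replicate_add]
  abel

lemma count_toPartition_eq_zero {Δ : List (ℕ × ℕ)} {a : ℕ} (ha : a ∉ Δ.map Prod.snd) :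
    (toPartition Δ).count a = 0 := by
  rw [toPartition, ← Multiset.coe_countAddMonoidHom, map_list_sum]
  refine List.sum_eq_zero fun n hn => ?_
  obtain ⟨q, hq, rfl⟩ := List.mem_map.mp (List.map_map ▸ hn)
  have hqa : q.2 ≠ a := fun h => ha (List.mem_map.mpr ⟨q, hq, h⟩)
  simp [Multiset.count_replicate, hqa]

lemma count_toPartition_of_mem {Δ : List (ℕ × ℕ)} (hnd : (Δ.map Prod.snd).Nodup)
    {p : ℕ × ℕ} (hp : p ∈ Δ) : (toPartition Δ).count p.2 = p.1 := by
  obtain ⟨A, C, rfl⟩ := List.append_of_mem hp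
  rw [List.map_append, List.map_cons, List.nodup_middle, List.nodup_cons, List.mem_append,
    not_or] at hnd
  rw [toPartition_append, toPartition_cons, Multiset.count_add, Multiset.count_add,
    count_toPartition_eq_zero hnd.1.1, count_toPartition_eq_zero hnd.1.2,
    Multiset.count_replicate_self]
  simp

lemma perm_canonical_of_nodup {Δ : List (ℕ × ℕ)} (hpos : ∀ p ∈ Δ, 0 < p.1)
    (hnd : (Δ.map Prod.snd).Nodup) :
    Δ.Perm ((toPartition Δ).toFinset.toList.map fun a => ((toPartition Δ).count a, a)) := by
  have hcanon : (((toPartition Δ).toFinset.toList.map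
      fun a => ((toPartition Δ).count a, a))).Nodup :=
    (Finset.nodup_toList _).map fun a b h => congrArg Prod.snd h
  refine (List.perm_ext_iff_of_nodup hnd.of_map hcanon).mpr fun p => ?_
  simp only [List.mem_map, Finset.mem_toList, Multiset.mem_toFinset]
  constructor
  · intro hp
    have hcount := count_toPartition_of_mem hnd hp
    exact ⟨p.2, Multiset.count_pos.mp (hcount ▸ hpos p hp), by rw [hcount]⟩
  · rintro ⟨a, ha, rfl⟩
    have ha' : a ∈ Δ.map Prod.snd := by
      by_contra h
      exact Multiset.count_ne_zero.mpr ha (count_toPartition_eq_zero h)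
    obtain ⟨q, hq, rfl⟩ := List.mem_map.mp ha'
    rwa [count_toPartition_of_mem hnd hq]

lemma exists_eq_append_cons_of_not_nodup_map_snd {Δ : List (ℕ × ℕ)}
    (h : ¬ (Δ.map Prod.snd).Nodup) :
    ∃ A T B T' C d, Δ = A ++ (T, d) :: (B ++ (T', d) :: C) := by
  induction Δ with
  | nil => simp at h
  | cons p Δ ih =>
    rw [List.map_cons, List.nodup_cons, not_and_or, not_not] at h
    rcases h with hp | hΔ
    · obtain ⟨⟨T', _⟩, hq, rfl⟩ := List.mem_map.mp hp
      obtain ⟨B, C, rfl⟩ := List.append_of_mem hq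
      exact ⟨[], p.1, B, T', C, p.2, rfl⟩
    · obtain ⟨A, T, B, T', C, d, rfl⟩ := ih hΔ
      exact ⟨p :: A, T, B, T', C, d, rfl⟩

theorem Rshape_le_RQ_toPartition (Δ : List (ℕ × ℕ)) (hpos : ∀ p ∈ Δ, 0 < p.1 ∧ 0 < p.2) :
    Rshape Δ ≤ RQ (toPartition Δ) := by
  by_cases hnd : (Δ.map Prod.snd).Nodup
  · exact (Rshape_perm (perm_canonical_of_nodup (fun p hp => (hpos p hp).1) hnd)).le
  obtain ⟨A, T, B, T', C, d, rfl⟩ := exists_eq_append_cons_of_not_nodup_map_snd hnd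
  obtain ⟨hT, hd⟩ : 0 < T ∧ 0 < d := hpos (T, d) (by simp)
  have hT' : 0 < T' := (hpos (T', d) (by simp)).1
  have hpos' : ∀ p ∈ A ++ (T + T', d) :: (B ++ C), 0 < p.1 ∧ 0 < p.2 := by
    intro p hp
    simp only [List.mem_append, List.mem_cons] at hp
    rcases hp with hp | rfl | hp | hp
    · exact hpos p (by simp [hp])
    · exact ⟨by omega, hd⟩
    · exact hpos p (by simp [hp])
    · exact hpos p (by simp [hp])
  refine le_of_lt ?_
  calc Rshape (A ++ (T, d) :: (B ++ (T', d) :: C))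
      < Rshape (A ++ (T + T', d) :: (B ++ C)) := Rshape_lt_merge A B C hT hT' hd
    _ ≤ RQ (toPartition (A ++ (T + T', d) :: (B ++ C))) := Rshape_le_RQ_toPartition _ hpos'
    _ = RQ (toPartition (A ++ (T, d) :: (B ++ (T', d) :: C))) := by rw [toPartition_merge]
termination_by Δ.length
decreasing_by subst_vars; simp only [List.length_append, List.length_cons]; omega

/-- Merging two blocks `(T,d)`, `(T',d)` with the same second coordinate into the
single block `(T+T',d)` strictly increases `R`. Consequently, among all shape data
inducing a fixed partition of `N`, the invariant `R` is maximized by the datum in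
which each distinct part value occurs in exactly one pair. -/
theorem merge_blocks_increases_R :
    (∀ (A B C : List (ℕ × ℕ)) (T T' d : ℕ), 0 < T → 0 < T' → 0 < d →
      (∀ p ∈ A ++ B ++ C, 0 < p.1 ∧ 0 < p.2) →
      Rshape (A ++ (T, d) :: (B ++ (T', d) :: C)) <
        Rshape (A ++ (T + T', d) :: (B ++ C))) ∧
    (∀ Δ : List (ℕ × ℕ), (∀ p ∈ Δ, 0 < p.1 ∧ 0 < p.2) →
      Rshape Δ ≤ RQ (toPartition Δ)) :=
  ⟨fun A B C _ _ _ hT hT' hd _ => Rshape_lt_merge A B C hT hT' hd, Rshape_le_RQ_toPartition⟩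
end

section
/- Let Q_0 be a partition whose parts are pairwise distinct integers each of size at least 2, let M be the sum of Q_0, and let N ≥ M be an integer. Let Q_can be the partition of N obtained by adjoining N − M parts equal to 1 to Q_0. Then for every partition Q of N that contains Q_0 as a subpartition (i.e. the multiset Q_0 is contained in the multiset Q), one has R(Q) ≤ R(Q_can). -/
open Finset

def blockR (r a : ℕ) : ℚ := (r : ℚ) ^ 2 * a / 2 - corr (r, a)

section blockR

variable {a : ℕ}

lemma blockR_zero_left (a : ℕ) : blockR 0 a = 0 := by simp [blockR, corr]

lemma blockR_one_left (a : ℕ) : blockR 1 a = 1 - (a : ℚ) ^ 2 / 2 := by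
  simp [blockR, corr]; ring

lemma blockR_two_left (a : ℕ) : blockR 2 a = 3 - a := by
  norm_num [blockR, corr]; ring

lemma blockR_three_left (ha : 2 ≤ a) : blockR 3 a = (1 / 10 ^ 100 - 1 / 2) * a + 5 := by
  norm_num [blockR, corr, show 1 < a by omega]; ring

lemma blockR_of_four_le {r : ℕ} (hr : 4 ≤ r) (a : ℕ) : blockR r a = (r : ℚ) ^ 2 * a / 2 := by
  simp [blockR, corr, show r ≠ 1 by omega, show r ≠ 2 by omega, show r ≠ 3 by omega]

lemma blockR_one_right (r : ℕ) : blockR r 1 = (r : ℚ) ^ 2 / 2 := by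
  rcases r with _ | _ | _ | r <;> norm_num [blockR, corr]

lemma blockR_add_sub_le {r₀ c : ℕ} (hr₀ : r₀ ≤ 1) (ha : 2 ≤ a) :
    blockR (r₀ + c) a - blockR r₀ a ≤ ((c : ℚ) * a) ^ 2 / 2 := by
  have ha' : (2 : ℚ) ≤ a := by exact_mod_cast ha
  rcases Nat.lt_or_ge (r₀ + c) 4 with hsmall | hlarge
  · have hc : c < 4 := by omega
    interval_cases r₀ <;> interval_cases c <;>
      simp only [zero_add, Nat.reduceAdd, blockR_zero_left, blockR_one_left, blockR_two_left,
        blockR_three_left ha] <;>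
      push_cast <;> nlinarith
  · have hc : (3 : ℚ) ≤ c := by exact_mod_cast (show 3 ≤ c by omega)
    rw [blockR_of_four_le hlarge]
    interval_cases r₀
    · rw [blockR_zero_left]
      push_cast
      nlinarith [mul_nonneg (sq_nonneg (c : ℚ)) (show (0 : ℚ) ≤ a * (a - 1) by nlinarith)]
    · rw [blockR_one_left]
      push_cast
      nlinarith [mul_nonneg (show (0 : ℚ) ≤ a * (1 + c) by positivity)
        (show (0 : ℚ) ≤ (c - 1) * a - (1 + c) by nlinarith)]

lemma sum_blockR_add_sub_le {F : Finset ℕ} {r₀ c : ℕ → ℕ} (hr₀ : ∀ a ∈ F, r₀ a ≤ 1)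
    (hF : ∀ a ∈ F, 2 ≤ a) :
    ∑ a ∈ F, blockR (r₀ a + c a) a - ∑ a ∈ F, blockR (r₀ a) a ≤
      ((∑ a ∈ F, c a * a : ℕ) : ℚ) ^ 2 / 2 := by
  rw [← sum_sub_distrib]
  calc ∑ a ∈ F, (blockR (r₀ a + c a) a - blockR (r₀ a) a)
      ≤ ∑ a ∈ F, ((c a : ℚ) * a) ^ 2 / 2 :=
        sum_le_sum fun a ha => blockR_add_sub_le (hr₀ a ha) (hF a ha)
    _ = (∑ a ∈ F, ((c a : ℚ) * a) ^ 2) / 2 := by rw [sum_div]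
    _ ≤ ((∑ a ∈ F, c a * a : ℕ) : ℚ) ^ 2 / 2 := by
        push_cast
        gcongr
        exact sum_sq_le_sq_sum_of_nonneg fun _ _ => by positivity

end blockR

lemma RQ_eq_sum_blockR (Q : Multiset ℕ) {F : Finset ℕ} (hF : Q.toFinset ⊆ F) :
    RQ Q = (Q.sum : ℚ) ^ 2 / 2 + ∑ a ∈ F, blockR (Q.count a) a := by
  have hsupp : ∑ a ∈ F, blockR (Q.count a) a = ∑ a ∈ Q.toFinset, blockR (Q.count a) a :=
    (sum_subset hF fun a _ ha => by
      rw [Multiset.count_eq_zero_of_notMem (mt Multiset.mem_toFinset.2 ha), blockR_zero_left]).symm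
  rw [hsupp, Finset.sum_multiset_count Q]
  unfold RQ Rshape Rbar rankShape blockR
  simp only [List.map_map, Function.comp_def, sum_map_toList, smul_eq_mul]
  rw [sum_sub_distrib, ← sum_div]
  ring

lemma RQ_add_le_RQ_add_replicate_one {Q₀ E : Multiset ℕ} (hnd : Q₀.Nodup) (h1 : 1 ∉ Q₀)
    (hpos : ∀ a ∈ Q₀ + E, 0 < a) :
    RQ (Q₀ + E) ≤ RQ (Q₀ + Multiset.replicate E.sum 1) := by
  set F := (Q₀ + E).toFinset.erase 1
  have h1F : 1 ∉ F := notMem_erase 1 _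
  have hF2 : ∀ a ∈ F, 2 ≤ a := fun a ha => by
    have := hpos a (Multiset.mem_toFinset.1 (mem_of_mem_erase ha))
    have := ne_of_mem_erase ha
    omega
  have hQ : (Q₀ + E).toFinset ⊆ insert 1 F := insert_erase_subset 1 _
  have hcan : (Q₀ + Multiset.replicate E.sum 1).toFinset ⊆ insert 1 F := by
    intro a
    simp only [F, Multiset.mem_toFinset, mem_insert, mem_erase, Multiset.mem_add,
      Multiset.mem_replicate]
    tauto
  have hEsum : E.count 1 + ∑ a ∈ F, E.count a * a = E.sum := by
    rw [Finset.sum_multiset_count_of_subset E (insert 1 F) fun a ha => hQ (by simp_all),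
      sum_insert h1F]
    simp
  have hcount : ∀ a ∈ F, (Q₀ + Multiset.replicate E.sum 1).count a = Q₀.count a := fun a ha => by
    simp [Multiset.count_replicate, (ne_of_mem_erase ha).symm]
  have hgain := sum_blockR_add_sub_le (c := E.count)
    (fun a _ => Multiset.nodup_iff_count_le_one.1 hnd a) hF2
  rw [RQ_eq_sum_blockR _ hQ, RQ_eq_sum_blockR _ hcan, sum_insert h1F, sum_insert h1F,
    sum_congr rfl fun a ha => congrArg (blockR · a) (hcount a ha)]
  simp only [Multiset.sum_add, Multiset.sum_replicate, smul_eq_mul, mul_one, Multiset.count_add,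
    Multiset.count_replicate_self, Multiset.count_eq_zero.2 h1, zero_add, blockR_one_right,
    ← hEsum, Nat.cast_add] at hgain ⊢
  nlinarith [mul_nonneg (Nat.cast_nonneg (α := ℚ) (E.count 1))
    (Nat.cast_nonneg (α := ℚ) (∑ a ∈ F, E.count a * a))]

theorem RQ_le_RQ_can_general (Q₀ : Multiset ℕ) (hnd : Q₀.Nodup) (h2 : ∀ a ∈ Q₀, 2 ≤ a)
    (N : ℕ)
    (Q : Multiset ℕ) (hpos : ∀ a ∈ Q, 0 < a) (hsum : Q.sum = N) (hsub : Q₀ ≤ Q) :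
    RQ Q ≤ RQ (Q₀ + Multiset.replicate (N - Q₀.sum) 1) := by
  obtain ⟨E, rfl⟩ := Multiset.le_iff_exists_add.1 hsub
  have hE : N - Q₀.sum = E.sum := by rw [← hsum, Multiset.sum_add]; omega
  rw [hE]
  exact RQ_add_le_RQ_add_replicate_one hnd (fun h => by have := h2 1 h; omega) hpos

/-- Let `Q₀` be a partition with pairwise distinct parts, each of size at least 2,
`M` its sum, and `N ≥ M`.  Let `Q_can` be obtained from `Q₀` by adjoining `N − M`
parts equal to `1`.  Then every partition `Q` of `N` containing `Q₀` as a
subpartition satisfies `R(Q) ≤ R(Q_can)`. -/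
theorem RQ_le_RQ_can (Q₀ : Multiset ℕ) (hnd : Q₀.Nodup) (h2 : ∀ a ∈ Q₀, 2 ≤ a)
    (N : ℕ) (hN : Q₀.sum ≤ N)
    (Q : Multiset ℕ) (hpos : ∀ a ∈ Q, 0 < a) (hsum : Q.sum = N) (hsub : Q₀ ≤ Q) :
    RQ Q ≤ RQ (Q₀ + Multiset.replicate (N - Q₀.sum) 1) :=
  RQ_le_RQ_can_general Q₀ hnd h2 N Q hpos hsum hsub
end

section
/- Let Q be a partition (a finite multiset of positive integers) containing parts a and b with a ≥ b ≥ 1, and let Q' be the partition obtained from Q by replacing one occurrence of a and one occurrence of b with parts a+1 and b−1 (omitting the part b−1 when b = 1). Then σ_i(Q') ≥ σ_i(Q) for every natural number i. -/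
/-- `ξ(n) = {n−1, n−3, …, n−2⌊n/2⌋+1}`, a multiset with `⌊n/2⌋` elements. -/
def xi (n : ℕ) : Multiset ℕ := (Multiset.range (n / 2)).map (fun j => n - 1 - 2 * j)

/-- `Ξ(Q)`: the multiset union of `ξ(n)` over the parts `n` of `Q`. -/
def Xi (Q : Multiset ℕ) : Multiset ℕ := Q.bind xi

/-- `σ_i(Q)`: the sum of the `i` largest elements of `Ξ(Q)`, counted with
multiplicity (the total sum if `i` exceeds the cardinality). -/
def sigmaP (Q : Multiset ℕ) (i : ℕ) : ℕ :=
  (((Xi Q).sort (· ≤ ·)).reverse.take i).sum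

/-! The sum of the `k` largest elements of `ξ(n)` is `(n-1) + (n-3) + ⋯ = k(n-k)` for
`k ≤ n/2`, and `σ_i` of a multiset union is the best split `σ_j(A) + σ_k(B)` with `j + k ≤ i`.
Writing `Ξ(Q) = ξ(a) + ξ(b) + R` and `Ξ(Q') = ξ(a+1) + ξ(b-1) + R`, an optimal choice for `Q`
takes `p` elements of `ξ(a)` and `q` of `ξ(b)`. If `p < q`, take `p+1` elements of `ξ(a+1)`
and `q-1` of `ξ(b-1)` instead: `(p+1)(a-p) + (q-1)(b-q)` exceeds `p(a-p) + q(b-q)` by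
`(a-p) - (b-q) ≥ 0`. Otherwise keep `p` elements of `ξ(a+1)`, which gains `p`, and at most `q`
elements of `ξ(b-1)`, which loses at most `q ≤ p`. -/

theorem List.Sublist.sum_le_sum_take_of_pairwise_ge {α : Type*} [AddCommMonoid α] [LinearOrder α]
    [IsOrderedAddMonoid α] {s t : List α} (hs : s.Sublist t) (ht : t.Pairwise (· ≥ ·)) :
    s.sum ≤ (t.take s.length).sum := by
  induction hs with
  | slnil => simp
  | @cons s t y hs ih =>
    obtain _ | ⟨x, s⟩ := s
    · simp
    have hlen : s.length < t.length := hs.length_le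
    rw [List.length_cons, List.take_succ_cons]
    calc (x :: s).sum ≤ (t.take (s.length + 1)).sum := ih ht.of_cons
      _ = (t.take s.length).sum + t[s.length] := List.sum_take_succ _ _ hlen
      _ ≤ (t.take s.length).sum + y :=
        add_le_add_right (List.rel_of_pairwise_cons ht (List.getElem_mem hlen)) _
      _ = (y :: t.take s.length).sum := by rw [List.sum_cons, add_comm]
  | @cons_cons s t x hs ih =>
    simpa only [List.length_cons, List.take_succ_cons, List.sum_cons] using
      add_le_add_right (ih ht.of_cons) x

namespace Multiset

variable {α : Type*} [AddCommMonoid α] [LinearOrder α]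

def topSum (M : Multiset α) (i : ℕ) : α := ((M.sort (· ≤ ·)).reverse.take i).sum

theorem topSum_coe_of_pairwise_ge {L : List α} (hL : L.Pairwise (· ≥ ·)) (i : ℕ) :
    (L : Multiset α).topSum i = (L.take i).sum := by
  have hsort : (L : Multiset α).sort (· ≤ ·) = L.reverse :=
    List.Perm.eq_of_pairwise' (pairwise_sort _ _) (by simpa [List.pairwise_reverse] using hL)
      (by rw [← coe_eq_coe, sort_eq, coe_reverse])
  rw [topSum, hsort, List.reverse_reverse]

theorem exists_le_card_le_sum_eq_topSum (M : Multiset α) (i : ℕ) :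
    ∃ T ≤ M, card T ≤ i ∧ T.sum = M.topSum i := by
  refine ⟨((M.sort (· ≤ ·)).reverse.take i : List α), ?_, by simp, rfl⟩
  calc _ ≤ (((M.sort (· ≤ ·)).reverse : List α) : Multiset α) :=
        coe_le.mpr (List.take_sublist _ _).subperm
    _ = M := by rw [coe_reverse, sort_eq]

section CanonicallyOrdered

variable [IsOrderedAddMonoid α] [CanonicallyOrderedAdd α]

theorem topSum_mono (M : Multiset α) : Monotone M.topSum := fun _ _ hij =>
  (List.take_sublist_take_left hij).sum_le_sum fun _ _ => _root_.zero_le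

theorem sum_le_topSum {S M : Multiset α} (h : S ≤ M) {i : ℕ} (hi : card S ≤ i) :
    S.sum ≤ M.topSum i := by
  set L := (M.sort (· ≤ ·)).reverse
  obtain ⟨l₀, rfl⟩ : ∃ l : List α, (l : Multiset α) = S := Quot.exists_rep S
  have hM : (L : Multiset α) = M := by rw [coe_reverse, sort_eq]
  obtain ⟨l, hperm, hsub⟩ := coe_le.mp (hM ▸ h : (l₀ : Multiset α) ≤ L)
  have hlen : l.length ≤ i := hperm.length_eq ▸ hi
  calc (l₀ : Multiset α).sum = l.sum := by rw [sum_coe, hperm.sum_eq]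
    _ ≤ (L.take l.length).sum := hsub.sum_le_sum_take_of_pairwise_ge <| by
        simp [L, List.pairwise_reverse]
    _ ≤ M.topSum i := M.topSum_mono hlen

theorem topSum_add_le (A B : Multiset α) (i : ℕ) : ∃ j k, j ≤ card A ∧ k ≤ card B ∧ j + k ≤ i ∧
    (A + B).topSum i ≤ A.topSum j + B.topSum k := by
  obtain ⟨T, hT, hTi, hTsum⟩ := (A + B).exists_le_card_le_sum_eq_topSum i
  have hsplit : T - A + T ∩ A = T := sub_add_inter T A
  have hTB : T - A ≤ B := Multiset.sub_le_iff_le_add'.mpr hT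
  refine ⟨card (T ∩ A), card (T - A), card_le_card inter_le_right, card_le_card hTB, ?_, ?_⟩
  · rw [add_comm, ← card_add, hsplit]; exact hTi
  · calc (A + B).topSum i = (T ∩ A).sum + (T - A).sum := by
          rw [← hTsum, add_comm, ← sum_add, hsplit]
      _ ≤ _ := add_le_add (sum_le_topSum inter_le_right le_rfl) (sum_le_topSum hTB le_rfl)

theorem topSum_add_topSum_le (A B : Multiset α) (j k : ℕ) :
    A.topSum j + B.topSum k ≤ (A + B).topSum (j + k) := by
  obtain ⟨S, hS, hSj, hSsum⟩ := A.exists_le_card_le_sum_eq_topSum j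
  obtain ⟨T, hT, hTk, hTsum⟩ := B.exists_le_card_le_sum_eq_topSum k
  rw [← hSsum, ← hTsum, ← sum_add]
  exact sum_le_topSum (add_le_add hS hT) (by rw [card_add]; omega)

end CanonicallyOrdered

end Multiset

theorem exists_mul_sub_add_mul_sub_le {a b p q : ℕ} (hba : b ≤ a) (hp : p ≤ a / 2)
    (hq : q ≤ b / 2) : ∃ p' q', p' ≤ (a + 1) / 2 ∧ q' ≤ (b - 1) / 2 ∧ p' + q' ≤ p + q ∧
      p * (a - p) + q * (b - q) ≤ p' * (a + 1 - p') + q' * (b - 1 - q') := by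
  rcases lt_or_ge p q with hpq | hqp
  · refine ⟨p + 1, q - 1, by omega, by omega, by omega, ?_⟩
    zify [show p + 1 ≤ a + 1 by omega, show q - 1 ≤ b - 1 by omega, show 1 ≤ q by omega,
      show 1 ≤ b by omega, show p ≤ a by omega, show q ≤ b by omega]
    linarith
  rcases le_or_gt q ((b - 1) / 2) with hqb | hqb
  · refine ⟨p, q, by omega, hqb, le_rfl, ?_⟩
    have hgain : p * (a + 1 - p) = p * (a - p) + p := by
      rw [show a + 1 - p = a - p + 1 by omega, mul_add_one]
    have hloss : q * (b - q) ≤ q * (b - 1 - q) + q := by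
      rw [← mul_add_one]; gcongr; omega
    omega
  · obtain rfl : b = 2 * q := by omega
    refine ⟨p, q - 1, by omega, by omega, by omega, ?_⟩
    zify [show p ≤ a + 1 by omega, show q - 1 ≤ 2 * q - 1 by omega, show 1 ≤ q by omega,
      show 1 ≤ 2 * q by omega, show p ≤ a by omega, show q ≤ 2 * q by omega]
    linarith

theorem card_xi (n : ℕ) : Multiset.card (xi n) = n / 2 := by simp [xi]

theorem sum_map_range_sub_two_mul {n k : ℕ} (hk : 2 * k ≤ n) :
    ((List.range k).map (fun j => n - 1 - 2 * j)).sum = k * (n - k) := by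
  induction k with
  | zero => simp
  | succ k ih =>
    rw [List.range_succ, List.map_append, List.sum_append, ih (by omega)]
    simp only [List.map_cons, List.map_nil, List.sum_cons, List.sum_nil]
    zify [show k ≤ n by omega, show k + 1 ≤ n by omega, show 1 ≤ n by omega,
      show 2 * k ≤ n - 1 by omega]
    ring

theorem topSum_xi {n k : ℕ} (hk : k ≤ n / 2) : (xi n).topSum k = k * (n - k) := by
  have hdesc : ((List.range (n / 2)).map (fun j => n - 1 - 2 * j)).Pairwise (· ≥ ·) :=
    List.pairwise_map.mpr (List.pairwise_lt_range.imp fun _ => by omega)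
  rw [xi, Multiset.range, Multiset.map_coe, Multiset.topSum_coe_of_pairwise_ge hdesc,
    ← List.map_take, List.take_range, min_eq_left hk, sum_map_range_sub_two_mul (by omega)]

theorem exists_topSum_xi_add_topSum_xi_le {a b p q : ℕ} (hba : b ≤ a) (hp : p ≤ a / 2)
    (hq : q ≤ b / 2) : ∃ p' q', p' + q' ≤ p + q ∧
      (xi a).topSum p + (xi b).topSum q ≤ (xi (a + 1)).topSum p' + (xi (b - 1)).topSum q' := by
  obtain ⟨p', q', hp', hq', hpq', hle⟩ := exists_mul_sub_add_mul_sub_le hba hp hq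
  exact ⟨p', q', hpq', by rwa [topSum_xi hp, topSum_xi hq, topSum_xi hp', topSum_xi hq']⟩

theorem Xi_cons (n : ℕ) (Q : Multiset ℕ) : Xi (n ::ₘ Q) = xi n + Xi Q := Multiset.cons_bind ..

theorem sigmaP_eq_topSum (Q : Multiset ℕ) (i : ℕ) : sigmaP Q i = (Xi Q).topSum i := rfl

open Multiset in
theorem sigma_mono_of_shift_general (Q : Multiset ℕ) (a b : ℕ)
    (ha : a ∈ Q) (hb : b ∈ Q.erase a) (hba : b ≤ a) (i : ℕ) :
    sigmaP Q i ≤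
      sigmaP ((a + 1) ::ₘ
        (if b = 1 then (Q.erase a).erase b
         else (b - 1) ::ₘ (Q.erase a).erase b)) i := by
  set R := Xi ((Q.erase a).erase b)
  have hQ : Xi Q = xi a + (xi b + R) := by
    rw [← Xi_cons, ← Xi_cons, cons_erase hb, cons_erase ha]
  have hQ' : Xi ((a + 1) ::ₘ (if b = 1 then (Q.erase a).erase b
      else (b - 1) ::ₘ (Q.erase a).erase b)) = xi (a + 1) + (xi (b - 1) + R) := by
    split_ifs with h
    · simp [Xi_cons, R, h, xi]
    · rw [Xi_cons, Xi_cons]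
  rw [sigmaP_eq_topSum, sigmaP_eq_topSum, hQ, hQ']
  obtain ⟨p, m, hp, -, hpm, hsplit₁⟩ := topSum_add_le (xi a) (xi b + R) i
  obtain ⟨q, r, hq, -, hqr, hsplit₂⟩ := topSum_add_le (xi b) R m
  rw [card_xi] at hp hq
  obtain ⟨p', q', hpq', hshift⟩ := exists_topSum_xi_add_topSum_xi_le hba hp hq
  calc (xi a + (xi b + R)).topSum i ≤ (xi a).topSum p + (xi b).topSum q + R.topSum r := by
        rw [add_assoc]; exact hsplit₁.trans (add_le_add le_rfl hsplit₂)
    _ ≤ (xi (a + 1)).topSum p' + (xi (b - 1)).topSum q' + R.topSum r := by gcongr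
    _ ≤ (xi (a + 1) + (xi (b - 1) + R)).topSum (p' + (q' + r)) := by
        rw [add_assoc]
        exact (add_le_add le_rfl (topSum_add_topSum_le _ _ _ _)).trans
          (topSum_add_topSum_le _ _ _ _)
    _ ≤ _ := topSum_mono _ (by omega)

/-- If `Q'` is obtained from the partition `Q` by replacing parts `a ≥ b ≥ 1` with
`a+1` and `b−1` (omitting `b−1` when `b = 1`), then `σ_i(Q') ≥ σ_i(Q)` for all `i`. -/
theorem sigma_mono_of_shift (Q : Multiset ℕ) (hpos : ∀ x ∈ Q, 0 < x) (a b : ℕ)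
    (ha : a ∈ Q) (hb : b ∈ Q.erase a) (hba : b ≤ a) (hb1 : 1 ≤ b) (i : ℕ) :
    sigmaP Q i ≤
      sigmaP ((a + 1) ::ₘ
        (if b = 1 then (Q.erase a).erase b
         else (b - 1) ::ₘ (Q.erase a).erase b)) i :=
  sigma_mono_of_shift_general Q a b ha hb hba i
end

section
/- Let d and N be integers with 1 ≤ d < N, and let Q_d be the partition of N consisting of ⌊N/d⌋ parts equal to d together with one part equal to N − d·⌊N/d⌋ when this is nonzero. Then for every partition Q of N all of whose parts are at most d, and for every natural number i, one has σ_i(Q) ≤ σ_i(Q_d). -/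
/-- The partition `Q_d` of `N`: `⌊N/d⌋` parts equal to `d`, together with one part
equal to `N − d·⌊N/d⌋` when this is nonzero. -/
def Qd (d N : ℕ) : Multiset ℕ :=
  Multiset.replicate (N / d) d + (if N % d = 0 then 0 else {N % d})

/-! For a multiset `M` of naturals, the sum of its `i` largest elements is the least value of
`i * t + ∑ x ∈ M, (x - t)` over `t`, attained at the `i`-th largest element. Summed over
`ξ(n)`, the truncated differences give `⌊(n - t)² / 4⌋`, a discrete convex function of `n`
vanishing at `0`. For such an `f`, among multisets with parts at most `d` and given total, the sum
of `f` over the parts is largest for `Q_d`: adding one part at a time, merging it with the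
remainder of the greedy decomposition (and splitting off a part `d` on overflow) can only increase
the sum. Choosing `t` optimal for `Q_d` then gives
`σ_i(Q) ≤ i * t + ∑_{n ∈ Q} f n ≤ i * t + ∑_{n ∈ Q_d} f n = σ_i(Q_d)`. -/

theorem List.sum_take_le_mul_add_sum_map_tsub (L : List ℕ) (i t : ℕ) :
    (L.take i).sum ≤ i * t + (L.map (· - t)).sum := by
  induction L generalizing i with
  | nil => simp
  | cons a L ih =>
    cases i with
    | zero => simp
    | succ i =>
      simp only [List.take_succ_cons, List.sum_cons, List.map_cons, add_mul, one_mul]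
      have := ih i
      omega

-- `L.getD (i - 1) 0` is the `i`-th largest entry; for `i = 0` it is the largest one, and `0`
-- once `i` exceeds the length.
theorem List.sum_take_eq_mul_add_sum_map_tsub {L : List ℕ} (hL : L.Pairwise (· ≥ ·)) (i : ℕ) :
    (L.take i).sum = i * L.getD (i - 1) 0 + (L.map (· - L.getD (i - 1) 0)).sum := by
  induction L generalizing i with
  | nil => simp
  | cons a L ih =>
    rw [List.pairwise_cons] at hL
    have hzero : (L.map (· - a)).sum = 0 := by
      simpa [List.sum_eq_zero_iff, Nat.sub_eq_zero_iff_le] using hL.1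
    rcases i with _ | _ | i
    · simp [hzero]
    · simp [hzero]
    · have hle : L.getD i 0 ≤ a := by
        rw [List.getD_eq_getElem?_getD]
        cases h : L[i]? with
        | none => simp
        | some x => exact hL.1 x (List.mem_of_getElem? h)
      simp only [List.take_succ_cons, List.sum_cons, List.map_cons, ih hL.2 (i + 1)]
      simp only [Nat.add_sub_cancel, List.getD_cons_succ, add_mul, one_mul]
      omega

theorem Multiset.sum_map_sort_reverse (M : Multiset ℕ) (f : ℕ → ℕ) :
    (((M.sort (· ≤ ·)).reverse).map f).sum = (M.map f).sum := by
  rw [← Multiset.sum_coe, ← Multiset.map_coe, Multiset.coe_reverse, Multiset.sort_eq]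

theorem isLeast_sigmaP (Q : Multiset ℕ) (i : ℕ) :
    IsLeast (Set.range fun t => i * t + ((Xi Q).map (· - t)).sum) (sigmaP Q i) := by
  have hsorted : ((Xi Q).sort (· ≤ ·)).reverse.Pairwise (· ≥ ·) :=
    List.pairwise_reverse.2 (Multiset.pairwise_sort _ _)
  refine ⟨⟨((Xi Q).sort (· ≤ ·)).reverse.getD (i - 1) 0, ?_⟩, ?_⟩
  · rw [sigmaP, List.sum_take_eq_mul_add_sum_map_tsub hsorted i, Multiset.sum_map_sort_reverse]
  · rintro _ ⟨t, rfl⟩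
    simpa only [sigmaP, Multiset.sum_map_sort_reverse] using
      List.sum_take_le_mul_add_sum_map_tsub ((Xi Q).sort (· ≤ ·)).reverse i t

theorem xi_add_two (n : ℕ) : xi (n + 2) = (n + 1) ::ₘ xi n := by
  rw [xi, xi, show (n + 2) / 2 = 1 + n / 2 by omega, Multiset.range_add, Multiset.map_add,
    Multiset.map_map, ← Multiset.singleton_add]
  refine congrArg₂ (· + ·) (by simp) (Multiset.map_congr rfl fun j _ => ?_)
  simp only [Function.comp_apply]
  omega

theorem sq_div_four_succ (k : ℕ) : (k + 1) ^ 2 / 4 = k ^ 2 / 4 + (k + 1) / 2 := by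
  rcases Nat.even_or_odd' k with ⟨j, rfl | rfl⟩
  · have h₁ : (2 * j) ^ 2 = 4 * j ^ 2 := by ring
    have h₂ : (2 * j + 1) ^ 2 = 4 * (j ^ 2 + j) + 1 := by ring
    omega
  · have h₁ : (2 * j + 1) ^ 2 = 4 * (j ^ 2 + j) + 1 := by ring
    have h₂ : (2 * j + 1 + 1) ^ 2 = 4 * (j ^ 2 + 2 * j + 1) := by ring
    omega

theorem tsub_sq_div_four_succ (n t : ℕ) :
    (n + 1 - t) ^ 2 / 4 = (n - t) ^ 2 / 4 + (n + 1 - t) / 2 := by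
  rcases le_or_gt t n with h | h
  · rw [show n + 1 - t = n - t + 1 by omega, sq_div_four_succ]
  · simp [show n + 1 - t = 0 by omega, show n - t = 0 by omega]

theorem sum_map_tsub_xi (t n : ℕ) : ((xi n).map (· - t)).sum = (n - t) ^ 2 / 4 := by
  induction n using Nat.twoStepInduction with
  | zero => simp [xi]
  | one => rcases t with _ | t <;> simp [xi]
  | more n ih _ =>
    rw [xi_add_two, Multiset.map_cons, Multiset.sum_cons, ih, tsub_sq_div_four_succ,
      tsub_sq_div_four_succ]
    omega

theorem sum_map_Xi (g : ℕ → ℕ) (Q : Multiset ℕ) :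
    ((Xi Q).map g).sum = (Q.map fun n => ((xi n).map g).sum).sum := by
  rw [Xi, Multiset.map_bind, Multiset.sum_bind]

-- Nondecreasing increments, stated additively to avoid truncated subtraction.
def IsDiscreteConvex (f : ℕ → ℕ) : Prop :=
  ∀ m n, m ≤ n → f (m + 1) + f n ≤ f m + f (n + 1)

theorem isDiscreteConvex_tsub_sq_div_four (t : ℕ) :
    IsDiscreteConvex fun n => (n - t) ^ 2 / 4 := by
  intro m n hmn
  simp only [tsub_sq_div_four_succ]
  have : (m + 1 - t) / 2 ≤ (n + 1 - t) / 2 := Nat.div_le_div_right (by omega)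
  omega

theorem sum_map_Qd {f : ℕ → ℕ} (hf0 : f 0 = 0) (d N : ℕ) :
    ((Qd d N).map f).sum = N / d * f d + f (N % d) := by
  by_cases h : N % d = 0 <;> simp [Qd, h, hf0]

namespace IsDiscreteConvex

variable {f : ℕ → ℕ}

theorem add_le_add (hf : IsDiscreteConvex f) (x p q : ℕ) :
    f (x + p) + f (x + q) ≤ f x + f (x + p + q) := by
  induction q with
  | zero => simp [add_comm]
  | succ q ih =>
    have := hf (x + q) (x + p + q) (by omega)
    rw [← add_assoc, ← add_assoc]
    omega

theorem sum_map_le_sum_map_Qd (hf : IsDiscreteConvex f) (hf0 : f 0 = 0) {d : ℕ} (hd : 0 < d)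
    {Q : Multiset ℕ} (hQ : ∀ a ∈ Q, a ≤ d) : (Q.map f).sum ≤ ((Qd d Q.sum).map f).sum := by
  rw [sum_map_Qd hf0]
  induction Q using Multiset.induction_on with
  | empty => simp [hf0]
  | cons a Q ih =>
    have ha := hQ a (Multiset.mem_cons_self a Q)
    have ih := ih fun x hx => hQ x (Multiset.mem_cons_of_mem hx)
    rw [Multiset.map_cons, Multiset.sum_cons, Multiset.sum_cons]
    set k := Q.sum / d
    set r := Q.sum % d
    have hr : r < d := Nat.mod_lt _ hd
    have hkr : r + d * k = Q.sum := Nat.mod_add_div _ _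
    rcases lt_or_ge (r + a) d with hcarry | hcarry
    · obtain ⟨hdiv, hmod⟩ := (Nat.div_mod_unique hd).2 (⟨by omega, hcarry⟩ :
        r + a + d * k = a + Q.sum ∧ r + a < d)
      have hmerge := hf.add_le_add 0 a r
      simp only [zero_add, hf0] at hmerge
      rw [hdiv, hmod, add_comm r a]
      omega
    · obtain ⟨hdiv, hmod⟩ := (Nat.div_mod_unique hd).2 (⟨by rw [mul_add]; omega, by omega⟩ :
        r + a - d + d * (k + 1) = a + Q.sum ∧ r + a - d < d)
      have hsplit := hf.add_le_add (r + a - d) (d - r) (d - a)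
      rw [show r + a - d + (d - r) + (d - a) = d by omega, show r + a - d + (d - r) = a by omega,
        show r + a - d + (d - a) = r by omega] at hsplit
      rw [hdiv, hmod, add_mul, one_mul]
      omega

end IsDiscreteConvex

theorem sigma_le_sigma_Qd_general (d N : ℕ) (hd : 1 ≤ d)
    (Q : Multiset ℕ) (hsum : Q.sum = N)
    (hle : ∀ a ∈ Q, a ≤ d) (i : ℕ) :
    sigmaP Q i ≤ sigmaP (Qd d N) i := by
  obtain ⟨⟨t, ht⟩, -⟩ := isLeast_sigmaP (Qd d N) i
  have hXi : ((Xi Q).map (· - t)).sum ≤ ((Xi (Qd d N)).map (· - t)).sum := by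
    simp only [sum_map_Xi, sum_map_tsub_xi, ← hsum]
    exact (isDiscreteConvex_tsub_sq_div_four t).sum_map_le_sum_map_Qd (by simp) hd hle
  calc sigmaP Q i ≤ i * t + ((Xi Q).map (· - t)).sum := (isLeast_sigmaP Q i).2 ⟨t, rfl⟩
    _ ≤ i * t + ((Xi (Qd d N)).map (· - t)).sum := Nat.add_le_add_left hXi _
    _ = sigmaP (Qd d N) i := ht

/-- For `1 ≤ d < N` and any partition `Q` of `N` all of whose parts are at most
`d`, one has `σ_i(Q) ≤ σ_i(Q_d)` for every `i`. -/
theorem sigma_le_sigma_Qd (d N : ℕ) (hd : 1 ≤ d) (hdN : d < N)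
    (Q : Multiset ℕ) (hpos : ∀ a ∈ Q, 0 < a) (hsum : Q.sum = N)
    (hle : ∀ a ∈ Q, a ≤ d) (i : ℕ) :
    sigmaP Q i ≤ sigmaP (Qd d N) i :=
  sigma_le_sigma_Qd_general d N hd Q hsum hle i
end

section
/- Let d and N be integers with d ≥ 2 and N ≥ 2d. Define the partition Q'_d of N as follows: if N ≢ −1 (mod d), then Q'_d has ⌊N/d⌋ − 1 parts equal to d, one part equal to d−1, and one part equal to N − d·⌊N/d⌋ + 1; if N ≡ −1 (mod d), then Q'_d has ⌊N/d⌋ − 1 parts equal to d, two parts equal to d−1, and one part equal to 1. Then for every partition Q of N all of whose parts are at most d and at most ⌊N/d⌋ − 1 of whose parts are equal to d, one has σ_i(Q) ≤ σ_i(Q'_d) for every natural number i. -/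
/-- The partition `Q'_d` of `N`: if `N ≢ −1 (mod d)` it has `⌊N/d⌋ − 1` parts
equal to `d`, one part `d−1` and one part `N − d·⌊N/d⌋ + 1`; if `N ≡ −1 (mod d)`
it has `⌊N/d⌋ − 1` parts equal to `d`, two parts `d−1` and one part `1`. -/
def Qd' (d N : ℕ) : Multiset ℕ :=
  if N % d = d - 1 then Multiset.replicate (N / d - 1) d + {d - 1, d - 1, 1}
  else Multiset.replicate (N / d - 1) d + {d - 1, N % d + 1}

def excess (s : ℕ) (M : Multiset ℕ) : ℕ := (M.map (· - s)).sum

namespace List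

theorem sum_take_le_mul_add_sum_map_tsub_s11 (A : List ℕ) (i t : ℕ) :
    (A.take i).sum ≤ i * t + (A.map (· - t)).sum := by
  induction A generalizing i with
  | nil => simp
  | cons a A ih =>
    cases i with
    | zero => simp
    | succ i =>
      simp only [take_succ_cons, sum_cons, map_cons]
      have := ih i
      rw [Nat.succ_mul]
      omega

theorem sum_map_tsub_add_length_mul {L : List ℕ} {t : ℕ} (h : ∀ a ∈ L, t ≤ a) :
    (L.map (· - t)).sum + L.length * t = L.sum := by
  induction L with
  | nil => simp
  | cons a L ih =>
    simp only [forall_mem_cons] at h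
    simp only [map_cons, sum_cons, length_cons, Nat.succ_mul]
    have := ih h.2
    omega

theorem exists_mul_add_sum_map_tsub_le_sum_take {B : List ℕ} (hB : B.Pairwise (· ≥ ·))
    (i : ℕ) : ∃ t, i * t + (B.map (· - t)).sum ≤ (B.take i).sum := by
  rcases le_or_gt B.length i with hi | hi
  · exact ⟨0, by simp [take_of_length_le hi]⟩
  refine ⟨B[i], le_of_eq ?_⟩
  have hsplit : B = B.take i ++ B[i] :: B.drop (i + 1) := by
    rw [← drop_eq_getElem_cons hi, take_append_drop]
  generalize B[i] = t at hsplit ⊢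
  rw [hsplit, pairwise_append, pairwise_cons] at hB
  obtain ⟨-, ⟨hrest, -⟩, hcross⟩ := hB
  have hhead : ∀ a ∈ B.take i, t ≤ a := fun a ha => hcross a ha _ mem_cons_self
  have htail : ((B.drop (i + 1)).map (· - t)).sum = 0 :=
    sum_eq_zero fun x hx => by
      obtain ⟨b, hb, rfl⟩ := mem_map.1 hx
      exact Nat.sub_eq_zero_of_le (hrest b hb)
  conv_lhs => rw [hsplit]
  rw [map_append, sum_append, map_cons, sum_cons, htail, Nat.sub_self,
    ← sum_map_tsub_add_length_mul hhead, length_take_of_le hi.le]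
  ring

theorem sum_take_le_sum_take_of_sum_map_tsub_le {A B : List ℕ} (hB : B.Pairwise (· ≥ ·))
    (h : ∀ t, (A.map (· - t)).sum ≤ (B.map (· - t)).sum) (i : ℕ) :
    (A.take i).sum ≤ (B.take i).sum := by
  obtain ⟨t, ht⟩ := exists_mul_add_sum_map_tsub_le_sum_take hB i
  calc (A.take i).sum ≤ i * t + (A.map (· - t)).sum := sum_take_le_mul_add_sum_map_tsub_s11 A i t
    _ ≤ i * t + (B.map (· - t)).sum := Nat.add_le_add_left (h t) _
    _ ≤ (B.take i).sum := ht

end List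

theorem sigmaP_le_sigmaP_of_excess_le {P Q : Multiset ℕ}
    (h : ∀ t, excess t (Xi Q) ≤ excess t (Xi P)) (i : ℕ) : sigmaP Q i ≤ sigmaP P i := by
  have hsorted (M : Multiset ℕ) : ((M.sort (· ≤ ·)).reverse).Pairwise (· ≥ ·) :=
    List.pairwise_reverse.2 (Multiset.pairwise_sort M _)
  have hexcess (M : Multiset ℕ) (t : ℕ) :
      (((M.sort (· ≤ ·)).reverse).map (· - t)).sum = excess t M := by
    rw [List.map_reverse, List.sum_reverse, excess, ← Multiset.sum_coe, ← Multiset.map_coe,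
      Multiset.sort_eq]
  refine List.sum_take_le_sum_take_of_sum_map_tsub_le (hsorted _) (fun t => ?_) i
  rw [hexcess, hexcess]
  exact h t

theorem excess_xi (t : ℕ) {n L : ℕ} (hn : n ≤ 2 * L) :
    excess t (xi n) = ∑ j ∈ Finset.range L, (n - (t + 1 + 2 * j)) := by
  rw [excess, xi, ← Finset.range_val, Multiset.map_map, Finset.sum_map_val]
  refine Finset.sum_subset (Finset.range_subset_range.2 (by omega)) (fun j _ hj => ?_)
    |>.trans (Finset.sum_congr rfl fun j _ => ?_)
  · simp only [Finset.mem_range, not_lt, Function.comp_apply] at hj ⊢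
    omega
  · simp only [Function.comp_apply]
    omega

theorem excess_Xi (t : ℕ) {L : ℕ} {Q : Multiset ℕ} (hQ : ∀ n ∈ Q, n ≤ 2 * L) :
    excess t (Xi Q) = ∑ j ∈ Finset.range L, excess (t + 1 + 2 * j) Q := by
  rw [excess, Xi, Multiset.map_bind, Multiset.sum_bind]
  change (Q.map fun n => excess t (xi n)).sum = _
  rw [Multiset.map_congr rfl fun n hn => excess_xi t (hQ n hn), Multiset.sum_map_sum]
  rfl

theorem excess_add_card_filter_mul_le_sum (s : ℕ) (M : Multiset ℕ) :
    excess s M + (M.filter (s < ·)).card * s ≤ M.sum := by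
  induction M using Multiset.induction_on with
  | empty => simp [excess]
  | cons a M ih =>
    simp only [excess, Multiset.map_cons, Multiset.sum_cons, Multiset.filter_cons] at ih ⊢
    split_ifs <;>
    simp only [Multiset.card_add, Multiset.card_singleton, add_mul, one_mul, zero_add] <;>
    omega

theorem excess_le_card_filter_mul_add_count {s d : ℕ} {M : Multiset ℕ} (hM : ∀ n ∈ M, n ≤ d) :
    excess s M ≤ (M.filter (s < ·)).card * (d - 1 - s) + M.count d := by
  induction M using Multiset.induction_on with
  | empty => simp [excess]
  | cons a M ih =>
    simp only [Multiset.mem_cons, forall_eq_or_imp] at hM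
    have ih := ih hM.2
    simp only [excess, Multiset.map_cons, Multiset.sum_cons, Multiset.filter_cons,
      Multiset.count_cons] at ih ⊢
    split_ifs <;>
    simp only [Multiset.card_add, Multiset.card_singleton, add_mul, one_mul, zero_add] <;>
    omega

theorem excess_Qd' (s d N : ℕ) :
    excess s (Qd' d N) = (N / d - 1) * (d - s) + (d - 1 - s) +
      if N % d = d - 1 then (d - 1 - s) + (1 - s) else N % d + 1 - s := by
  unfold Qd'
  split_ifs <;>
  simp only [excess, Multiset.map_add, Multiset.sum_add, Multiset.map_replicate,
    Multiset.sum_replicate, smul_eq_mul, Multiset.insert_eq_cons, Multiset.map_cons,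
    Multiset.sum_cons, Multiset.map_singleton, Multiset.sum_singleton] <;>
  ring

theorem excess_le_excess_Qd' {d N : ℕ} (hN : d ≤ N) {Q : Multiset ℕ} (hsum : Q.sum = N)
    (hle : ∀ a ∈ Q, a ≤ d) (hcount : Q.count d ≤ N / d - 1) (s : ℕ) :
    excess s Q ≤ excess s (Qd' d N) := by
  rcases le_or_gt d s with hds | hsd
  · have hQ : excess s Q = 0 := Multiset.sum_eq_zero fun x hx => by
      obtain ⟨a, ha, rfl⟩ := Multiset.mem_map.1 hx
      exact Nat.sub_eq_zero_of_le ((hle a ha).trans hds)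
    exact hQ ▸ Nat.zero_le _
  obtain ⟨e, rfl⟩ : ∃ e, d = s + 1 + e := ⟨d - s - 1, by omega⟩
  have h₁ := excess_add_card_filter_mul_le_sum s Q
  have h₂ := excess_le_card_filter_mul_add_count (s := s) hle
  rw [excess_Qd', show s + 1 + e - s = e + 1 by omega]
  rw [show s + 1 + e - 1 - s = e by omega] at h₂ ⊢
  set k := (Q.filter (s < ·)).card
  set m := N / (s + 1 + e) - 1
  set r := N % (s + 1 + e)
  have hN' : N = (m + 1) * (s + 1 + e) + r := by
    rw [Nat.sub_add_cancel ((Nat.one_le_div_iff (by omega)).2 hN), Nat.div_add_mod']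
  have hr : r < s + 1 + e := Nat.mod_lt _ (by omega)
  rw [hsum] at h₁
  split_ifs with hspecial
  · have hr_eq : r = s + e := by omega
    rcases le_or_gt k (m + 2) with hk | hk
    · have hke : k * e ≤ (m + 2) * e := Nat.mul_le_mul_right e hk
      linarith
    · have hks : (m + 3) * s ≤ k * s := Nat.mul_le_mul_right s hk
      have hs : 1 ≤ 1 - s + s := le_tsub_add
      linarith
  · rcases le_or_gt k (m + 1) with hk | hk
    · have hke : k * e ≤ (m + 1) * e := Nat.mul_le_mul_right e hk
      linarith
    · have hks : (m + 2) * s ≤ k * s := Nat.mul_le_mul_right s hk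
      have hs : r + 1 ≤ r + 1 - s + s := le_tsub_add
      linarith

theorem sigma_le_sigma_Qd'_general (d N : ℕ) (hN : 2 * d ≤ N)
    (Q : Multiset ℕ) (hsum : Q.sum = N)
    (hle : ∀ a ∈ Q, a ≤ d) (hcount : Q.count d ≤ N / d - 1) (i : ℕ) :
    sigmaP Q i ≤ sigmaP (Qd' d N) i := by
  have hQ : ∀ a ∈ Q, a ≤ 2 * (N + 1) := fun a ha => by have := hle a ha; omega
  have hQd' : ∀ a ∈ Qd' d N, a ≤ 2 * (N + 1) := by
    have := Nat.mod_le N d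
    unfold Qd'
    split_ifs <;> simp only [Multiset.insert_eq_cons, Multiset.mem_add, Multiset.mem_replicate,
      Multiset.mem_cons, Multiset.mem_singleton] <;> omega
  refine sigmaP_le_sigmaP_of_excess_le (fun t => ?_) i
  rw [excess_Xi t hQ, excess_Xi t hQd']
  exact Finset.sum_le_sum fun j _ => excess_le_excess_Qd' (by omega) hsum hle hcount _

/-- For `d ≥ 2`, `N ≥ 2d`, and any partition `Q` of `N` all of whose parts are at
most `d` and with at most `⌊N/d⌋ − 1` parts equal to `d`, one has
`σ_i(Q) ≤ σ_i(Q'_d)` for every `i`. -/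
theorem sigma_le_sigma_Qd' (d N : ℕ) (hd : 2 ≤ d) (hN : 2 * d ≤ N)
    (Q : Multiset ℕ) (hpos : ∀ a ∈ Q, 0 < a) (hsum : Q.sum = N)
    (hle : ∀ a ∈ Q, a ≤ d) (hcount : Q.count d ≤ N / d - 1) (i : ℕ) :
    sigmaP Q i ≤ sigmaP (Qd' d N) i :=
  sigma_le_sigma_Qd'_general d N hN Q hsum hle hcount i
end

section
/- For all integers d ≥ 2 and N ≥ 2d: 1 − (d−1)/(N − ⌊N/d⌋ + 1) > N(N−d)/(N² − 1). -/
/-! Put `M = N - ⌊N/d⌋ + 1`. Clearing denominators, the inequality becomes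
`(d - 1)(N² - 1) < M (N d - 1)`, and `d ⌊N/d⌋ ≤ N` gives `d M ≥ N (d - 1) + d`; after
multiplying by `d`, the difference of the two sides is at least `N (d² - d + 1) + d² - 2d > 0`. -/

section
variable {K : Type*} [Field K] [LinearOrder K] [IsStrictOrderedRing K]

theorem div_lt_one_sub_div_iff {N d M : K} (hN : 1 < N) (hM : 0 < M) :
    N * (N - d) / (N ^ 2 - 1) < 1 - (d - 1) / M ↔ (d - 1) * (N ^ 2 - 1) < M * (N * d - 1) := by
  have hN2 : 0 < N ^ 2 - 1 := by nlinarith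
  rw [one_sub_div hM.ne', div_lt_div_iff₀ hN2 hM]
  constructor <;> intro h <;> linarith

theorem sub_one_mul_sq_sub_one_lt {N d q : K} (hN : 1 < N) (hd : 1 ≤ d) (hqd : q * d ≤ N) :
    (d - 1) * (N ^ 2 - 1) < (N - q + 1) * (N * d - 1) := by
  have hM : N * (d - 1) + d ≤ d * (N - q + 1) := by linarith
  have hNd : 0 ≤ N * d - 1 := by nlinarith
  have hgap : 0 < d * ((N - q + 1) * (N * d - 1) - (d - 1) * (N ^ 2 - 1)) :=
    calc (0 : K) < N * (d ^ 2 - d + 1) + d ^ 2 - 2 * d := by nlinarith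
      _ = (N * (d - 1) + d) * (N * d - 1) - d * ((d - 1) * (N ^ 2 - 1)) := by ring
      _ ≤ d * (N - q + 1) * (N * d - 1) - d * ((d - 1) * (N ^ 2 - 1)) := by
        gcongr
      _ = d * ((N - q + 1) * (N * d - 1) - (d - 1) * (N ^ 2 - 1)) := by ring
  linarith [(pos_iff_pos_of_mul_pos hgap).mp (by linarith)]

end

/-- For integers `d ≥ 2` and `N ≥ 2d`:
`1 − (d−1)/(N − ⌊N/d⌋ + 1) > N(N−d)/(N² − 1)` (an inequality of rationals,
with `⌊N/d⌋` the integer floor). -/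
theorem sarnak_xue_key_ineq_not_Qd (d N : ℕ) (hd : 2 ≤ d) (hN : 2 * d ≤ N) :
    (N : ℚ) * ((N : ℚ) - (d : ℚ)) / ((N : ℚ) ^ 2 - 1) <
      1 - ((d : ℚ) - 1) / ((N : ℚ) - ((N / d : ℕ) : ℚ) + 1) := by
  have hN1 : (1 : ℚ) < N := by exact_mod_cast (by omega : 1 < N)
  have hd1 : (1 : ℚ) ≤ d := by exact_mod_cast (by omega : 1 ≤ d)
  have hqd : ((N / d : ℕ) : ℚ) * d ≤ N := by exact_mod_cast Nat.div_mul_le_self N d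
  have hqN : ((N / d : ℕ) : ℚ) ≤ N := by exact_mod_cast Nat.div_le_self N d
  rw [div_lt_one_sub_div_iff hN1 (by linarith)]
  exact sub_one_mul_sq_sub_one_lt hN1 hd1 hqd
end

section
/- For all integers d ≥ 2 and N ≥ 2d such that N ≠ 2d, N ≠ 2d + 1, and (N,d) ≠ (6,2): 1 − (d−1)/(N − ⌊N/d⌋) > ( (1/2)(N² + ⌊N/d⌋²·d + N − d·⌊N/d⌋) − 1 ) / (N² − 1). -/
/-!
Write `q = ⌊N/d⌋`, `r = N - dq` and `s = N - q - 2d`. Clearing denominators, the inequality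
becomes `2(d-1)(N² - 1) < (N² - dq² - r)(N - q)`, and the difference of the two sides is
`(d-1)((dq² + r)s + 2) + r(d(d-1)(2q-1)(q-2) + r(r + (3d-1)(q-1) + 1))`,
which is positive as soon as `d > 1`, `q ≥ 2`, `r ≥ 0` and `s ≥ 0`. For `d ≥ 2` and `N ≥ 2d`
the condition `s ≥ 0` fails exactly for the three excluded pairs `(N, d)`.
-/

section

variable {K : Type*} [Field K] [LinearOrder K] [IsStrictOrderedRing K]

theorem sarnakXue_cleared_ineq {d q N : K} (hd : 1 < d) (hq : 2 ≤ q)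
    (hdq : d * q ≤ N) (hN : 2 * d + q ≤ N) :
    2 * (d - 1) * (N ^ 2 - 1) < (N ^ 2 - d * q ^ 2 - (N - d * q)) * (N - q) := by
  set r := N - d * q
  set s := N - 2 * d - q
  have hd0 : 0 < d := by linarith
  have hd1 : 0 < d - 1 := by linarith
  have hd3 : 0 < 3 * d - 1 := by linarith
  have hq1 : 0 < q - 1 := by linarith
  have hq2 : 0 ≤ q - 2 := by linarith
  have hq3 : 0 < 2 * q - 1 := by linarith
  have hr : 0 ≤ r := by linarith
  have hs : 0 ≤ s := by linarith
  have hA : 0 < (d - 1) * ((d * q ^ 2 + r) * s + 2) := by positivity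
  have hB : 0 ≤ r * (d * (d - 1) * (2 * q - 1) * (q - 2) + r * (r + (3 * d - 1) * (q - 1) + 1)) := by
    positivity
  linear_combination hA + hB

theorem sarnakXue_ratio_lt {d q N : K} (hd : 1 < d) (hq : 2 ≤ q)
    (hdq : d * q ≤ N) (hN : 2 * d + q ≤ N) :
    (1 / 2 * (N ^ 2 + q ^ 2 * d + N - d * q) - 1) / (N ^ 2 - 1) < 1 - (d - 1) / (N - q) := by
  have hNq : 0 < N - q := by linarith
  have hN1 : 0 < N ^ 2 - 1 := by nlinarith
  rw [one_sub_div hNq.ne', div_lt_div_iff₀ hN1 hNq]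
  linear_combination (1 / 2 : K) * sarnakXue_cleared_ineq hd hq hdq hN

end

theorem two_mul_add_div_le {d N : ℕ} (hd : 2 ≤ d) (hN : 2 * d + 2 ≤ N) (h : ¬(N = 6 ∧ d = 2)) :
    2 * d + N / d ≤ N := by
  rcases Nat.lt_or_ge d 3 with hd2 | hd3
  · obtain rfl : d = 2 := by omega
    omega
  have hdiv := Nat.div_add_mod N d
  generalize N / d = q at hdiv ⊢
  rcases Nat.lt_or_ge q 3 with hq | hq
  · interval_cases q <;> omega
  · nlinarith [Nat.zero_le (N % d)]

/-- For integers `d ≥ 2` and `N ≥ 2d` with `N ≠ 2d`, `N ≠ 2d + 1` and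
`(N,d) ≠ (6,2)`:
`1 − (d−1)/(N − ⌊N/d⌋) > ((1/2)(N² + ⌊N/d⌋²·d + N − d·⌊N/d⌋) − 1)/(N² − 1)`
(an inequality of rationals, with `⌊N/d⌋` the integer floor). -/
theorem sarnak_xue_key_ineq_Qd (d N : ℕ) (hd : 2 ≤ d) (hN : 2 * d ≤ N)
    (h1 : N ≠ 2 * d) (h2 : N ≠ 2 * d + 1) (h3 : ¬(N = 6 ∧ d = 2)) :
    ((1 / 2 : ℚ) * ((N : ℚ) ^ 2 + ((N / d : ℕ) : ℚ) ^ 2 * (d : ℚ) + (N : ℚ)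
        - (d : ℚ) * ((N / d : ℕ) : ℚ)) - 1) / ((N : ℚ) ^ 2 - 1) <
      1 - ((d : ℚ) - 1) / ((N : ℚ) - ((N / d : ℕ) : ℚ)) := by
  have hq : 2 ≤ N / d := (Nat.le_div_iff_mul_le (by omega)).2 (by omega)
  have hdq : d * (N / d) ≤ N := Nat.mul_div_le N d
  have hs : 2 * d + N / d ≤ N := two_mul_add_div_le hd (by omega) h3
  exact sarnakXue_ratio_lt (by exact_mod_cast hd) (by exact_mod_cast hq) (by exact_mod_cast hdq)
    (by exact_mod_cast hs)
end
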